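/- Let P be a simple polygon with n ≥ 3 vertices and let s be a point of the interior of P that does not lie on the line spanned by any edge of P. For each edge e of P that is weakly visible from s (i.e., the relative interior of e contains a point t with the relative interior of segment[s, t] contained in the interior of P), let H(e) be the closed half-plane bounded by the line spanned by e that contains s. Then the intersection of the half-planes H(e), taken over all edges e of P weakly visible from s, is a bounded subset of ℝ². -/

import Mathlib

open Set

/-- The plane ℝ². -/
abbrev Plane := EuclideanSpace ℝ (Fin 2)

/-- The `i`-th edge of a polygon with vertices `v 0, …, v (n-1)`:
the segment from `v i` to `v ((i+1) % n)`. -/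
def polyEdge (n : ℕ) (v : ℕ → Plane) (i : ℕ) : Set Plane :=
  segment ℝ (v i) (v ((i + 1) % n))

/-- `P` is a simple polygon with vertices `v 0, …, v (n-1)`: a compact set with
nonempty connected interior whose frontier is the union of the `n` edges; the
vertices are pairwise distinct, consecutive edges meet exactly in their common
vertex, and non-consecutive edges are disjoint. -/
def IsSimplePolygon (n : ℕ) (P : Set Plane) (v : ℕ → Plane) : Prop :=
  IsCompact P ∧ IsConnected (interior P) ∧
  (∀ i < n, ∀ j < n, v i = v j → i = j) ∧
  (frontier P = ⋃ i ∈ Finset.range n, polyEdge n v i) ∧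
  (∀ i < n, ∀ j < n, i ≠ j →
    (j = (i + 1) % n → polyEdge n v i ∩ polyEdge n v j = {v j}) ∧
    (i = (j + 1) % n → polyEdge n v i ∩ polyEdge n v j = {v i}) ∧
    (j ≠ (i + 1) % n → i ≠ (j + 1) % n →
      Disjoint (polyEdge n v i) (polyEdge n v j)))

/-- A diffuse reflection path in `P` from `s` to `t` with `m` segments
(`m - 1` reflections), given by the points `p 0 = s, p 1, …, p m = t`:
all points lie in `P`, every intermediate point lies in the relative interior
(open segment) of some edge of `P`, and the relative interior of each segment
of the path lies in the interior of `P`. -/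
def IsDiffusePath (n : ℕ) (P : Set Plane) (v : ℕ → Plane)
    (s t : Plane) (m : ℕ) (p : ℕ → Plane) : Prop :=
  p 0 = s ∧ p m = t ∧ (∀ i ≤ m, p i ∈ P) ∧
  (∀ i, 0 < i → i < m → ∃ j < n, p i ∈ openSegment ℝ (v j) (v ((j + 1) % n))) ∧
  (∀ i < m, openSegment ℝ (p i) (p (i + 1)) ⊆ interior P)

/-- `Vis n P v s k` is `V_k(s)`: the set of points `t ∈ P` reachable from `s`
by a diffuse reflection path with at most `k` reflections. -/
def Vis (n : ℕ) (P : Set Plane) (v : ℕ → Plane) (s : Plane) (k : ℕ) : Set Plane :=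
  {t | t ∈ P ∧ ∃ m, m - 1 ≤ k ∧ ∃ p : ℕ → Plane, IsDiffusePath n P v s t m p}

/-- The 2D cross product `(q - p) × (x - p)`, whose sign tells on which side of
the line through `p` and `q` the point `x` lies. -/
noncomputable def crossProd (p q x : Plane) : ℝ :=
  (q 0 - p 0) * (x 1 - p 1) - (q 1 - p 1) * (x 0 - p 0)

/-- The closed half-plane bounded by the line through `p` and `q` that
contains `s` (assuming `s` is not on that line): the set of points `x` lying
on the same side of the line as `s`, or on the line itself. -/
def halfPlane (p q s : Plane) : Set Plane :=
  {x | 0 ≤ crossProd p q s * crossProd p q x}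

/-!
Let `P ⊆ closedBall s R`. If the ray from `s` through a point `x` of the intersection `K` of
the half-planes misses every vertex, it leaves `P` at a point `E` in the relative interior of
some edge `e`; the segment from `s` to `E` runs inside `P`, so `e` is weakly visible, and since
`x` lies on the side of the line of `e` containing `s`, it comes no later than `E` on the ray:
`dist x s ≤ dist E s ≤ R`. The points whose ray meets a vertex lie on finitely many lines, and
`K` is convex with `s` in its interior, so the other points of `K` are dense in `K`.
-/

open Metric Bornology Module

theorem exists_pos_mem_frontier_openSegment_subset_interior {E : Type*} [NormedAddCommGroup E]
    [NormedSpace ℝ E] {P : Set E} (hP : IsBounded P) {s u : E} (hs : s ∈ interior P)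
    (hu : u ≠ 0) :
    ∃ T : ℝ, 0 < T ∧ s + T • u ∈ frontier P ∧ openSegment ℝ s (s + T • u) ⊆ interior P := by
  set A := {t : ℝ | 0 ≤ t ∧ s + t • u ∉ interior P}
  have hray : Continuous fun t : ℝ => s + t • u := by fun_prop
  have hA_closed : IsClosed A :=
    isClosed_Ici.inter (isOpen_interior.preimage hray).isClosed_compl
  have hA_nonempty : A.Nonempty := by
    obtain ⟨R, hR⟩ := hP.subset_closedBall s
    have hu' : 0 < ‖u‖ := norm_pos_iff.2 hu
    refine ⟨(|R| + 1) / ‖u‖, by positivity, fun h => ?_⟩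
    have := hR (interior_subset h)
    rw [mem_closedBall, dist_eq_norm, add_sub_cancel_left, norm_smul, Real.norm_of_nonneg
      (by positivity), div_mul_cancel₀ _ hu'.ne'] at this
    linarith [le_abs_self R]
  have hA_bdd : BddBelow A := ⟨0, fun t ht => ht.1⟩
  -- the first time the ray leaves the interior of `P`
  set T := sInf A
  obtain ⟨hT0, hTA⟩ : T ∈ A := hA_closed.csInf_mem hA_nonempty hA_bdd
  have hbefore : ∀ r ∈ Ico 0 T, s + r • u ∈ interior P := fun r hr => by
    by_contra h
    exact notMem_of_lt_csInf hr.2 hA_bdd ⟨hr.1, h⟩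
  have hT : 0 < T := hT0.lt_of_ne fun h => hTA (by simpa [← h] using hs)
  refine ⟨T, hT, ⟨?_, hTA⟩, ?_⟩
  · have hT_closure : T ∈ closure (Ico 0 T) := by
      rw [closure_Ico hT.ne]; exact right_mem_Icc.2 hT0
    exact closure_mono interior_subset
      (map_mem_closure (f := fun t : ℝ => s + t • u) hray hT_closure hbefore)
  · rw [openSegment_eq_image']
    rintro _ ⟨θ, hθ, rfl⟩
    simpa [smul_smul] using hbefore (θ * T) ⟨by nlinarith [hθ.1], by nlinarith [hθ.2]⟩

theorem Collinear.interior_eq_empty {V : Type*} [NormedAddCommGroup V] [NormedSpace ℝ V]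
    [FiniteDimensional ℝ V] {s : Set V} (h : Collinear ℝ s) (hV : 1 < finrank ℝ V) :
    interior s = ∅ := by
  by_contra hne
  have hspan : vectorSpan ℝ (interior s) = ⊤ := by
    rw [← direction_affineSpan, isOpen_interior.affineSpan_eq_top
      (nonempty_iff_ne_empty.2 hne), AffineSubspace.direction_top]
  have := collinear_iff_finrank_le_one.1 (h.subset interior_subset)
  rw [hspan, finrank_top] at this
  omega

theorem collinear_affineSpan_pair {k V : Type*} [DivisionRing k] [AddCommGroup V] [Module k V]
    (a b : V) : Collinear k (line[k, a, b] : Set V) := by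
  rw [collinear_iff_rank_le_one, ← AffineSubspace.direction_eq_vectorSpan, direction_affineSpan]
  exact collinear_pair k a b

theorem dense_compl_biUnion_affineSpan_pair {V ι : Type*} [NormedAddCommGroup V]
    [NormedSpace ℝ V] [FiniteDimensional ℝ V] (hV : 1 < finrank ℝ V) {S : Set ι}
    (hS : S.Finite) (a b : ι → V) : Dense (⋃ i ∈ S, (line[ℝ, a i, b i] : Set V))ᶜ := by
  have := FiniteDimensional.complete ℝ V
  rw [compl_iUnion₂]
  exact dense_biInter_of_isOpen
    (fun i _ => (AffineSubspace.closed_of_finiteDimensional _).isOpen_compl) hS.countable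
    fun i _ => interior_eq_empty_iff_dense_compl.1
      ((collinear_affineSpan_pair _ _).interior_eq_empty hV)

theorem Convex.subset_closure_inter_of_dense {E : Type*} [NormedAddCommGroup E]
    [NormedSpace ℝ E] {K G : Set E} (hK : Convex ℝ K) (hKi : (interior K).Nonempty)
    (hG : Dense G) :
    K ⊆ closure (K ∩ G) :=
  calc K ⊆ closure K := subset_closure
    _ = closure (interior K) := (hK.closure_interior_eq_closure_of_nonempty_interior hKi).symm
    _ ⊆ closure (closure (interior K ∩ G)) :=
      closure_mono (hG.open_subset_closure_inter isOpen_interior)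
    _ ⊆ closure (K ∩ G) := by
      rw [closure_closure]; exact closure_mono (inter_subset_inter_left _ interior_subset)

theorem crossProd_combo (p q : Plane) {α β : ℝ} (hαβ : α + β = 1) (x y : Plane) :
    crossProd p q (α • x + β • y) = α * crossProd p q x + β * crossProd p q y := by
  simp only [crossProd, PiLp.add_apply, PiLp.smul_apply, smul_eq_mul]
  linear_combination ((q 0 - p 0) * p 1 - (q 1 - p 1) * p 0) * hαβ

theorem crossProd_eq_zero_of_mem_segment {p q x : Plane} (hx : x ∈ segment ℝ p q) :
    crossProd p q x = 0 := by
  obtain ⟨α, β, -, -, hαβ, rfl⟩ := hx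
  rw [crossProd_combo p q hαβ]
  simp only [crossProd]
  ring

theorem crossProd_ne_zero {a b z : Plane} (hab : a ≠ b) (hz : z ∉ line[ℝ, a, b]) :
    crossProd a b z ≠ 0 := by
  intro h
  set N := (b 0 - a 0) ^ 2 + (b 1 - a 1) ^ 2
  have hN : N ≠ 0 := by
    intro hN
    apply hab
    ext i
    fin_cases i <;> simp <;> nlinarith [sq_nonneg (b 0 - a 0), sq_nonneg (b 1 - a 1)]
  -- the parameter of `z` on the line is the projection of `z - a` onto `b - a`
  apply hz
  convert AffineMap.lineMap_mem_affineSpan_pair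
    (((z 0 - a 0) * (b 0 - a 0) + (z 1 - a 1) * (b 1 - a 1)) / N) a b
  simp only [crossProd] at h
  ext i
  fin_cases i <;>
    simp only [Fin.zero_eta, Fin.mk_one, AffineMap.lineMap_apply_module, PiLp.add_apply,
      PiLp.smul_apply, smul_eq_mul] <;>
    field_simp
  · linear_combination -(b 1 - a 1) * h
  · linear_combination (b 0 - a 0) * h

theorem convex_halfPlane (p q s : Plane) : Convex ℝ (halfPlane p q s) := by
  intro x hx y hy α β hα hβ hαβ
  simp only [halfPlane, mem_ofPred_eq, crossProd_combo p q hαβ] at *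
  nlinarith [mul_nonneg hα hx, mul_nonneg hβ hy]

theorem self_mem_interior_halfPlane {p q s : Plane} (hs : s ∉ line[ℝ, p, q]) :
    s ∈ interior (halfPlane p q s) := by
  rcases eq_or_ne p q with rfl | hpq
  · simp [halfPlane, crossProd]
  replace hs := crossProd_ne_zero hpq hs
  have hcont : Continuous fun x => crossProd p q s * crossProd p q x := by
    unfold crossProd; fun_prop
  rw [mem_interior_iff_mem_nhds]
  filter_upwards [continuousAt_const.eventually_lt hcont.continuousAt (mul_self_pos.2 hs)]
    with x hx using hx.le

theorem one_le_of_mem_halfPlane {a b s u : Plane} {T : ℝ} (hs : crossProd a b s ≠ 0)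
    (hT : 0 < T) (hE : crossProd a b (s + T • u) = 0) (hx : s + u ∈ halfPlane a b s) :
    1 ≤ T := by
  have hx_comb : s + u = (1 - T⁻¹) • s + T⁻¹ • (s + T • u) := by
    rw [smul_add, smul_smul, inv_mul_cancel₀ hT.ne']; module
  rw [halfPlane, mem_ofPred_eq, hx_comb, crossProd_combo _ _ (by ring), hE] at hx
  have h : 0 ≤ (1 - T⁻¹) * (crossProd a b s * crossProd a b s) := by linear_combination hx
  have := nonneg_of_mul_nonneg_left h (mul_self_pos.2 hs)
  rw [sub_nonneg, inv_le_one₀ hT] at this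
  exact this

def IsWeaklyVisible {E : Type*} [AddCommGroup E] [Module ℝ E] [TopologicalSpace E]
    (P : Set E) (s a b : E) : Prop :=
  ∃ t ∈ openSegment ℝ a b, openSegment ℝ s t ⊆ interior P

theorem dist_le_of_forall_isWeaklyVisible_mem_halfPlane {n : ℕ} {P : Set Plane}
    {v : ℕ → Plane} {s x : Plane} {R : ℝ} (hPR : P ⊆ closedBall s R)
    (hfr : frontier P = ⋃ i ∈ Finset.range n, polyEdge n v i) (hs : s ∈ interior P)
    (hline : ∀ i < n, s ∉ line[ℝ, v i, v ((i + 1) % n)])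
    (hx : ∀ i < n, IsWeaklyVisible P s (v i) (v ((i + 1) % n)) →
      x ∈ halfPlane (v i) (v ((i + 1) % n)) s)
    (hxv : ∀ j < n, x ∉ line[ℝ, s, v j]) :
    dist x s ≤ R := by
  rcases eq_or_ne x s with rfl | hxs
  · simpa using hPR (interior_subset hs)
  obtain ⟨T, hT, hEfr, hEvis⟩ := exists_pos_mem_frontier_openSegment_subset_interior
    (isBounded_closedBall.subset hPR) hs (sub_ne_zero.2 hxs)
  set E := s + T • (x - s)
  have hE_ne_vertex : ∀ j < n, E ≠ v j := by
    intro j hj hEj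
    refine hxv j hj (hEj ▸ ?_)
    convert AffineMap.lineMap_mem_affineSpan_pair T⁻¹ s E
    simp only [E, AffineMap.lineMap_apply_module, smul_add, smul_smul, inv_mul_cancel₀ hT.ne']
    module
  obtain ⟨i, hi, hEi⟩ : ∃ i < n, E ∈ polyEdge n v i := by
    simpa [hfr] using hEfr
  have hi' : (i + 1) % n < n := Nat.mod_lt _ (by omega)
  have hE_open : E ∈ openSegment ℝ (v i) (v ((i + 1) % n)) :=
    mem_openSegment_of_ne_left_right (hE_ne_vertex i hi).symm (hE_ne_vertex _ hi').symm hEi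
  have hab : v i ≠ v ((i + 1) % n) := by
    intro h
    rw [h, openSegment_same] at hE_open
    exact hE_ne_vertex _ hi' hE_open
  have hT1 : 1 ≤ T := one_le_of_mem_halfPlane (crossProd_ne_zero hab (hline i hi)) hT
    (crossProd_eq_zero_of_mem_segment hEi) (by simpa using hx i hi ⟨E, hE_open, hEvis⟩)
  calc dist x s = ‖x - s‖ := dist_eq_norm x s
    _ ≤ T * ‖x - s‖ := le_mul_of_one_le_left (norm_nonneg _) hT1
    _ = dist E s := by simp [E, dist_eq_norm, norm_smul, abs_of_pos hT]
    _ ≤ R := closure_minimal hPR isClosed_closedBall (frontier_subset_closure hEfr)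

theorem iInter_halfPlane_isBounded_general (n : ℕ)
    (P : Set Plane) (v : ℕ → Plane)
    (hP : IsSimplePolygon n P v) (s : Plane) (hs : s ∈ interior P)
    (hline : ∀ i < n, s ∉ affineSpan ℝ ({v i, v ((i + 1) % n)} : Set Plane)) :
    Bornology.IsBounded
      (⋂ i ∈ {i : ℕ | i < n ∧ ∃ t ∈ openSegment ℝ (v i) (v ((i + 1) % n)),
          openSegment ℝ s t ⊆ interior P},
        halfPlane (v i) (v ((i + 1) % n)) s) := by
  obtain ⟨R, hR⟩ := hP.1.isBounded.subset_closedBall s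
  set S := {i : ℕ | i < n ∧ IsWeaklyVisible P s (v i) (v ((i + 1) % n))}
  set K := ⋂ i ∈ S, halfPlane (v i) (v ((i + 1) % n)) s
  have hS : S.Finite := (finite_lt_nat n).subset fun i hi => hi.1
  have hK : Convex ℝ K := convex_iInter₂ fun i _ => convex_halfPlane _ _ _
  have hsK : s ∈ interior K := by
    rw [hS.interior_biInter]
    exact mem_iInter₂.2 fun i hi => self_mem_interior_halfPlane (hline i hi.1)
  have hG := dense_compl_biUnion_affineSpan_pair (by simp : 1 < finrank ℝ Plane)
    (finite_lt_nat n) (fun _ => s) v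
  change IsBounded K
  refine (isBounded_closedBall (x := s) (r := R)).subset <|
    (hK.subset_closure_inter_of_dense ⟨s, hsK⟩ hG).trans <|
      closure_minimal ?_ isClosed_closedBall
  rintro x ⟨hxK, hxG⟩
  exact mem_closedBall.2 <| dist_le_of_forall_isWeaklyVisible_mem_halfPlane hR hP.2.2.2.1 hs
    hline (fun i hi hvis => mem_iInter₂.1 hxK i ⟨hi, hvis⟩) (by simpa using hxG)

/-- **Proposition (boundedness).** For an interior point `s` of a simple
polygon `P`, not lying on the line spanned by any edge, the intersection of
the closed half-planes `H(e)`, over all edges `e` of `P` weakly visible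
from `s`, bounded by the line spanned by `e` and containing `s`, is bounded. -/
theorem iInter_halfPlane_isBounded (n : ℕ) (hn : 3 ≤ n)
    (P : Set Plane) (v : ℕ → Plane)
    (hP : IsSimplePolygon n P v) (s : Plane) (hs : s ∈ interior P)
    (hline : ∀ i < n, s ∉ affineSpan ℝ ({v i, v ((i + 1) % n)} : Set Plane)) :
    Bornology.IsBounded
      (⋂ i ∈ {i : ℕ | i < n ∧ ∃ t ∈ openSegment ℝ (v i) (v ((i + 1) % n)),
          openSegment ℝ s t ⊆ interior P},
        halfPlane (v i) (v ((i + 1) % n)) s) :=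
  iInter_halfPlane_isBounded_general n P v hP s hs hline
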